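/- The characteristic function of the standardized hyperbolic secant distribution is sech(ω): ∫_{-∞}^{∞} e^{iωx} · (1/2)·sech(πx/2) dx = sech(ω) for all real ω. -/

import Mathlib

/-!
With `y = π x` the integral becomes `π⁻¹ ∫ e^{s y} / (1 + e^y) dy` for `s = 1/2 + i ω / π`.
The sigmoid substitution `u = (1 + e^{-y})⁻¹` turns `∫ e^{s y} / (1 + e^y) dy` into the Beta
integral `B(s, 1 - s) = Γ(s) Γ(1 - s) = π / sin (π s)`, and `sin (π/2 + i ω) = cosh ω`.
-/

open MeasureTheory Real Complex

noncomputable def hsDensity (x : ℝ) : ℝ := (1 / 2) * (Real.cosh (Real.pi * x / 2))⁻¹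

lemma Complex.ofReal_exp_cpow (a : ℝ) (w : ℂ) : (Real.exp a : ℂ) ^ w = cexp (a * w) := by
  rw [cpow_def_of_ne_zero (ofReal_ne_zero.mpr (Real.exp_pos a).ne'),
    ← ofReal_log (Real.exp_pos a).le, Real.log_exp]

lemma Real.sigmoid_eq_exp_log_sigmoid_neg (y : ℝ) :
    sigmoid y = Real.exp (y + Real.log (sigmoid (-y))) := by
  rw [Real.exp_add, Real.exp_log (sigmoid_pos _), ← sigmoid_mul_rexp_neg, mul_left_comm,
    ← Real.exp_add, add_neg_cancel, Real.exp_zero, mul_one]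

lemma abs_deriv_sigmoid_smul_beta_integrand (s : ℂ) (y : ℝ) :
    |sigmoid y * (1 - sigmoid y)| •
        ((sigmoid y : ℂ) ^ (s - 1) * (1 - (sigmoid y : ℂ)) ^ (1 - s - 1)) =
      cexp (s * y) / (1 + Real.exp y) := by
  set L := Real.log (sigmoid (-y))
  have hv : 1 - sigmoid y = Real.exp L := by rw [← sigmoid_neg, Real.exp_log (sigmoid_pos _)]
  have hdenom : (1 + (Real.exp y : ℂ))⁻¹ = Real.exp L := by
    rw [Real.exp_log (sigmoid_pos _), sigmoid_def, neg_neg]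
    push_cast
    rfl
  rw [sub_sub_cancel_left, div_eq_mul_inv, hdenom, ← ofReal_one, ← ofReal_sub, hv,
    sigmoid_eq_exp_log_sigmoid_neg, ← Real.exp_add, abs_of_pos (Real.exp_pos _),
    ofReal_exp_cpow, ofReal_exp_cpow, real_smul, ofReal_exp, ofReal_exp, ← Complex.exp_add,
    ← Complex.exp_add, ← Complex.exp_add]
  congr 1
  push_cast
  ring

theorem Complex.integral_exp_mul_div_one_add_exp {s : ℂ} (hs0 : 0 < s.re) (hs1 : s.re < 1) :
    ∫ y : ℝ, cexp (s * y) / (1 + Real.exp y) = π / Complex.sin (π * s) := by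
  have hbeta : betaIntegral s (1 - s) = Gamma s * Gamma (1 - s) := by
    rw [Gamma_mul_Gamma_eq_betaIntegral hs0 (by simpa using hs1), add_sub_cancel, Gamma_one,
      one_mul]
  calc ∫ y : ℝ, cexp (s * y) / (1 + Real.exp y)
      = ∫ y : ℝ, |sigmoid y * (1 - sigmoid y)| •
          ((sigmoid y : ℂ) ^ (s - 1) * (1 - (sigmoid y : ℂ)) ^ (1 - s - 1)) := by
        simp_rw [abs_deriv_sigmoid_smul_beta_integrand]
    _ = ∫ u in Set.range sigmoid, (u : ℂ) ^ (s - 1) * (1 - (u : ℂ)) ^ (1 - s - 1) := by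
        rw [← Set.image_univ, integral_image_eq_integral_abs_deriv_smul MeasurableSet.univ
          (fun y _ ↦ (hasDerivAt_sigmoid y).hasDerivWithinAt) sigmoid_injective.injOn,
          setIntegral_univ]
    _ = betaIntegral s (1 - s) := by
        rw [range_sigmoid, betaIntegral, intervalIntegral.integral_of_le zero_le_one,
          integral_Ioc_eq_integral_Ioo]
    _ = π / Complex.sin (π * s) := by rw [hbeta, Gamma_mul_Gamma_one_sub]

lemma hsDensity_eq (x : ℝ) :
    hsDensity x = Real.exp (π * x / 2) / (1 + Real.exp (π * x)) := by
  have h : Real.exp (π * x) = Real.exp (π * x / 2) * Real.exp (π * x / 2) := by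
    rw [← Real.exp_add, add_halves]
  rw [hsDensity, Real.cosh_eq, h, Real.exp_neg]
  field_simp
  ring

theorem hs_characteristic_function (ω : ℝ) :
    ∫ x : ℝ, Complex.exp (Complex.I * ω * x) * (hsDensity x : ℂ)
      = ((Real.cosh ω)⁻¹ : ℝ) := by
  set s : ℂ := 1 / 2 + I * ω / π
  have hintegrand (x : ℝ) : cexp (I * ω * x) * (hsDensity x : ℂ) =
      cexp (s * ↑(π * x)) / (1 + Real.exp (π * x)) := by
    rw [hsDensity_eq, ofReal_div, ofReal_exp, mul_div_assoc', ← Complex.exp_add]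
    push_cast
    congr 2
    simp only [s]
    field_simp
    ring
  have hsin : Complex.sin (π * s) = Real.cosh ω := by
    rw [show (π : ℂ) * s = ω * I + π / 2 by simp only [s]; field_simp; ring,
      Complex.sin_add_pi_div_two, cos_mul_I, ofReal_cosh]
  simp_rw [hintegrand]
  rw [Measure.integral_comp_mul_left (fun y : ℝ ↦ cexp (s * y) / (1 + Real.exp y)),
    integral_exp_mul_div_one_add_exp (by norm_num [s]) (by norm_num [s]), hsin,
    abs_of_pos (inv_pos.mpr pi_pos), real_smul]
  push_cast
  field_simp
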